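/- Say a linear order L has property (*) if every uncountable subset of L contains an uncountable subset order-isomorphic to a set of reals. If L has property (*) and each L_p (p ∈ L) has property (*), then the lexicographic gluing {(p,q) : p ∈ L, q ∈ L_p} also has property (*). -/

import Mathlib

/-! Let `A` be an uncountable subset of the gluing. If some fibre `{q | (p, q) ∈ A}` is
uncountable, property (*) of `L_p` applies to it, and on a single fibre the lexicographic order
is the order of `L_p`. Otherwise `A`, a union of countable fibres, has an uncountable projection
to `L`; property (*) of `L` gives an uncountable real-embeddable `Q` inside it, and a section of
`A` over `Q` is ordered by first coordinates. In both cases the embedding is transported along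
an injection onto a subset of `A`. -/

open Ordinal Set

noncomputable section

/-- Parity of an ordinal: `a = γ + n` with `γ` limit, `n < ω`; even iff `n` is even. -/
def OrdEven (a : Ordinal) : Prop := a % 2 = 0

/-- Upper semicontinuity. -/
def USC {X : Type} [TopologicalSpace X] (f : X → ℝ) : Prop :=
  ∀ r : ℝ, IsOpen (f ⁻¹' Set.Iio r)

/-- The least ordinal where two transfinite sequences differ. -/
def dOrd (f g : Ordinal → ℝ) : Ordinal := sInf {a | f a ≠ g a}

/-- The alternating lexicographical order on transfinite sequences of reals. -/
def AltLex (f g : Ordinal → ℝ) : Prop :=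
  f ≠ g ∧ ((OrdEven (dOrd f g) ∧ f (dOrd f g) < g (dOrd f g)) ∨
    (¬ OrdEven (dOrd f g) ∧ g (dOrd f g) < f (dOrd f g)))

/-- `f` encodes a strictly decreasing countable transfinite sequence in `[0,1]`
with last element `0` at index `ξ` (padded with `0` beyond `ξ`). -/
def IsDSeqLen (f : Ordinal → ℝ) (ξ : Ordinal) : Prop :=
  ξ < (Cardinal.aleph 1).ord ∧ (∀ a, f a ∈ Set.Icc (0:ℝ) 1) ∧
  (∀ a b, a < b → b ≤ ξ → f b < f a) ∧ (∀ a, ξ ≤ a → f a = 0)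

/-- Membership in `[0,1]^{<ω₁}_{↘0}`. -/
def IsDSeq (f : Ordinal → ℝ) : Prop := ∃ ξ, IsDSeqLen f ξ

/-- Property (*): every uncountable subset contains an uncountable subset
order-isomorphic to a set of reals. -/
def PropStarRel (α : Type) (r : α → α → Prop) : Prop :=
  ∀ A : Set α, ¬ A.Countable → ∃ B ⊆ A, ¬ B.Countable ∧
    ∃ g : α → ℝ, (∀ x ∈ B, ∀ y ∈ B, r x y → g x < g y) ∧ Set.InjOn g B

open Function

section RealEmbedding

variable {α β : Type*} {rα : α → α → Prop} {rβ : β → β → Prop}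

theorem Set.nonempty_of_not_countable {s : Set α} (h : ¬s.Countable) : s.Nonempty :=
  nonempty_iff_ne_empty.2 fun hs => h (hs ▸ countable_empty)

theorem not_countable_image_and_exists_realEmbedding {e : β → α} {B : Set β} (he : InjOn e B)
    (hB : ¬B.Countable) (hr : ∀ x ∈ B, ∀ y ∈ B, rα (e x) (e y) → rβ x y) {g : β → ℝ}
    (hg : ∀ x ∈ B, ∀ y ∈ B, rβ x y → g x < g y) (hg_inj : InjOn g B) :
    ¬(e '' B).Countable ∧ ∃ g' : α → ℝ,
      (∀ x ∈ e '' B, ∀ y ∈ e '' B, rα x y → g' x < g' y) ∧ InjOn g' (e '' B) := by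
  have : Nonempty β := (nonempty_of_not_countable hB).to_type
  have hinv := he.leftInvOn_invFunOn
  refine ⟨fun h => hB ((mapsTo_image e B).countable_of_injOn he h), g ∘ invFunOn e B, ?_, ?_⟩
  · rintro _ ⟨x, hx, rfl⟩ _ ⟨y, hy, rfl⟩ hxy
    rw [comp_apply, comp_apply, hinv hx, hinv hy]
    exact hg x hx y hy (hr x hx y hy hxy)
  · rintro _ ⟨x, hx, rfl⟩ _ ⟨y, hy, rfl⟩ hxy
    rw [comp_apply, comp_apply, hinv hx, hinv hy] at hxy
    rw [hg_inj hx hy hxy]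

end RealEmbedding

section SigmaLex

variable {ι : Type*} {κ : ι → Type*} {r : ι → ι → Prop} {s : ∀ i, κ i → κ i → Prop}

theorem Set.Countable.of_image_fst {A : Set (Σ i, κ i)} (h : (Sigma.fst '' A).Countable)
    (hfib : ∀ i, {a | (⟨i, a⟩ : Σ i, κ i) ∈ A}.Countable) : A.Countable := by
  refine (h.biUnion fun i _ => (hfib i).image (Sigma.mk i)).mono ?_
  rintro ⟨i, a⟩ ha
  exact mem_biUnion ⟨⟨i, a⟩, ha, rfl⟩ ⟨a, ha, rfl⟩

theorem Sigma.lex_mk_mk_same_iff [Std.Irrefl r] {i : ι} {a b : κ i} :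
    Sigma.Lex r s ⟨i, a⟩ ⟨i, b⟩ ↔ s i a b :=
  ⟨fun h => by cases h with
    | left _ _ h => exact absurd h (irrefl i)
    | right _ _ h => exact h,
   Sigma.Lex.right a b⟩

theorem Sigma.Lex.fst_of_fst_ne {a b : Σ i, κ i} (h : Sigma.Lex r s a b) (hne : a.1 ≠ b.1) :
    r a.1 b.1 :=
  (Sigma.lex_iff.1 h).resolve_right fun ⟨heq, _⟩ => hne heq

end SigmaLex

theorem PropStarRel.sigmaLex {ι : Type} {κ : ι → Type} {r : ι → ι → Prop}
    {s : ∀ i, κ i → κ i → Prop} [Std.Irrefl r] [∀ i, Std.Irrefl (s i)]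
    (hr : PropStarRel ι r) (hs : ∀ i, PropStarRel (κ i) (s i)) :
    PropStarRel (Σ i, κ i) (Sigma.Lex r s) := by
  intro A hA
  by_cases hfib : ∃ i, ¬{a | (⟨i, a⟩ : Σ i, κ i) ∈ A}.Countable
  · obtain ⟨i, hi⟩ := hfib
    obtain ⟨B, hBA, hB, g, hg, hg_inj⟩ := hs i _ hi
    refine ⟨Sigma.mk i '' B, image_subset_iff.2 hBA,
      not_countable_image_and_exists_realEmbedding sigma_mk_injective.injOn hB
        (fun a _ b _ => Sigma.lex_mk_mk_same_iff.1) hg hg_inj⟩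
  · push Not at hfib
    obtain ⟨Q, hQA, hQ, g, hg, hg_inj⟩ :=
      hr _ fun h => hA (h.of_image_fst hfib)
    have : Nonempty (Σ i, κ i) := (nonempty_of_not_countable hA).to_type
    have hsection : ∀ i ∈ Q, ∃ a ∈ A, a.1 = i := fun i hi => hQA hi
    choose! f hfA hf using hsection
    have hf_inj : InjOn f Q := fun i hi j hj hij => by rw [← hf i hi, ← hf j hj, hij]
    have hr_f : ∀ i ∈ Q, ∀ j ∈ Q, Sigma.Lex r s (f i) (f j) → r i j := by
      intro i hi j hj hij
      obtain rfl | hne := eq_or_ne i j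
      · exact absurd hij (irrefl _)
      · simpa only [hf i hi, hf j hj] using hij.fst_of_fst_ne (by rwa [hf i hi, hf j hj])
    refine ⟨f '' Q, image_subset_iff.2 hfA,
      not_countable_image_and_exists_realEmbedding hf_inj hQ hr_f hg hg_inj⟩

theorem stmt_17 (L : Type) [LinearOrder L] (Lp : L → Type) [∀ p, LinearOrder (Lp p)]
    (hL : PropStarRel L (· < ·)) (hLp : ∀ p, PropStarRel (Lp p) (· < ·)) :
    PropStarRel (Σ p : L, Lp p)
      (fun x y => x.1 < y.1 ∨ ∃ h : x.1 = y.1, h ▸ x.2 < y.2) := by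
  have hlex : (fun x y : Σ p : L, Lp p => x.1 < y.1 ∨ ∃ h : x.1 = y.1, h ▸ x.2 < y.2) =
      Sigma.Lex (· < ·) (fun _ => (· < ·)) := by
    funext x y
    rw [Sigma.lex_iff]
  rw [hlex]
  exact hL.sigmaLex hLp
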